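/- Let p ∈ {2, 3}, F the free group on two generators, and n ≥ 2. Then F/λ_n(F) is not a Beauville group. -/

import Mathlib

/-- The subgroup generated by `m`-th powers of elements of `H`. -/
def pPow {G : Type*} [Group G] (H : Subgroup G) (m : ℕ) : Subgroup G :=
  Subgroup.closure {x : G | ∃ h ∈ H, x = h ^ m}

/-- The `p`-central series: `lam p 1 = ⊤` and `lam p (n+1) = [lam p n, G] ⊔ (lam p n)^p`.
    (We also set `lam p 0 = ⊤`.) -/
def lam {G : Type*} [Group G] (p : ℕ) : ℕ → Subgroup G
  | 0 => ⊤
  | 1 => ⊤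
  | (n+2) => ⁅(lam p (n+1) : Subgroup G), (⊤ : Subgroup G)⁆ ⊔ pPow (lam p (n+1)) p

theorem pPow_normal {G : Type*} [Group G] (H : Subgroup G) [hH : H.Normal] (m : ℕ) :
    (pPow H m).Normal := by
  have key : ∀ x ∈ pPow H m, ∀ g : G, g * x * g⁻¹ ∈ pPow H m := by
    intro x hx
    induction hx using Subgroup.closure_induction with
    | mem y hy =>
        intro g
        obtain ⟨h, hh, rfl⟩ := hy
        refine Subgroup.subset_closure ⟨g * h * g⁻¹, hH.conj_mem h hh g, ?_⟩
        exact conj_pow.symm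
    | one => intro g; simpa using (pPow H m).one_mem
    | mul x y hx hy ihx ihy =>
        intro g
        have h2 := mul_mem (ihx g) (ihy g)
        have : g * x * g⁻¹ * (g * y * g⁻¹) = g * (x * y) * g⁻¹ := by group
        rwa [this] at h2
    | inv x hx ihx =>
        intro g
        have h2 := inv_mem (ihx g)
        have : (g * x * g⁻¹)⁻¹ = g * x⁻¹ * g⁻¹ := by group
        rwa [this] at h2
  exact ⟨fun x hx g => key x hx g⟩

theorem lam_normal' {G : Type*} [Group G] (p : ℕ) : ∀ n, (lam (G := G) p n).Normal
  | 0 => inferInstanceAs (⊤ : Subgroup G).Normal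
  | 1 => inferInstanceAs (⊤ : Subgroup G).Normal
  | (n+2) => by
      haveI := lam_normal' (G := G) p (n+1)
      haveI := pPow_normal (lam (G := G) p (n+1)) p
      show (⁅(lam p (n+1) : Subgroup G), (⊤ : Subgroup G)⁆ ⊔ pPow (lam p (n+1)) p).Normal
      infer_instance

instance lam_normal {G : Type*} [Group G] (p n : ℕ) : (lam (G := G) p n).Normal :=
  lam_normal' p n

/-- The union of all conjugates of the cyclic subgroup generated by `x`. -/
def conjClosure {G : Type*} [Group G] (x : G) : Set G :=
  ⋃ g : G, (fun h => g⁻¹ * h * g) '' (Subgroup.zpowers x : Set G)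

/-- `Σ(x,y)`: the union of all conjugates of `⟨x⟩`, `⟨y⟩` and `⟨xy⟩`. -/
def SigmaSet {G : Type*} [Group G] (x y : G) : Set G :=
  conjClosure x ∪ conjClosure y ∪ conjClosure (x * y)

/-- `{x₁,y₁}` and `{x₂,y₂}` form a Beauville structure for `G`. -/
def IsBeauvilleStructure {G : Type*} [Group G] (x₁ y₁ x₂ y₂ : G) : Prop :=
  Subgroup.closure {x₁, y₁} = ⊤ ∧ Subgroup.closure {x₂, y₂} = ⊤ ∧
    SigmaSet x₁ y₁ ∩ SigmaSet x₂ y₂ = {1}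

/-- A Beauville group: a finite nontrivial (2-generated) group admitting a Beauville
structure. -/
def IsBeauvilleGroup (G : Type*) [Group G] : Prop :=
  Finite G ∧ Nontrivial G ∧ ∃ x₁ y₁ x₂ y₂ : G, IsBeauvilleStructure x₁ y₁ x₂ y₂

/-!
Write `G = F/λₙ(F)` with `n = m + 2`. Exponent sums identify `G/λ₂(G)` with `(ℤ/p)²`, and a
generating pair `x, y` of `G` maps onto a basis, so `x`, `y`, `xy` span three distinct lines of
`(ℤ/p)²`. There are only `p + 1 ≤ 4` lines, so for two generating pairs some
`u₁ ∈ {x₁, y₁, x₁y₁}` and `u₂ ∈ {x₂, y₂, x₂y₂}` satisfy `u₂ ≡ u₁ᵏ mod λ₂(G)` with `u₂ ∉ λ₂(G)`.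
The congruence `(uz)^(p^m) ≡ u^(p^m) mod λ_{m+2}` for `z ∈ λ₂` gives
`u₂^(p^m) = u₁^(k p^m) ∈ Σ₁ ∩ Σ₂`. This element is nontrivial: `λ_{m+2}(F)` maps into
`p^(m+1) ℤ²` under the exponent sums, so `w^(p^m) ∈ λ_{m+2}(F)` forces the exponent sums of `w`
into `p ℤ²`, that is `w ∈ λ₂(F)`.
-/

open scoped commutatorElement

section Lam

variable {G : Type*} [Group G] (p : ℕ)

theorem lam_add_two (n : ℕ) :
    lam (G := G) p (n + 2) = ⁅(lam p (n + 1) : Subgroup G), ⊤⁆ ⊔ pPow (lam p (n + 1)) p :=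
  rfl

theorem pPow_le_self (H : Subgroup G) (m : ℕ) : pPow H m ≤ H :=
  (Subgroup.closure_le H).mpr (by rintro _ ⟨h, hh, rfl⟩; exact pow_mem hh m)

theorem map_pPow {G' : Type*} [Group G'] (f : G →* G') (H : Subgroup G) (m : ℕ) :
    (pPow H m).map f = pPow (H.map f) m := by
  rw [pPow, pPow, MonoidHom.map_closure]
  congr 1
  ext x
  constructor
  · rintro ⟨_, ⟨h, hh, rfl⟩, rfl⟩
    exact ⟨f h, ⟨h, hh, rfl⟩, map_pow f h m⟩
  · rintro ⟨_, ⟨h, hh, rfl⟩, rfl⟩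
    exact ⟨h ^ m, ⟨h, hh, rfl⟩, map_pow f h m⟩

theorem lam_antitone : Antitone (lam (G := G) p) := by
  refine antitone_nat_of_succ_le fun
    | 0 => le_top
    | n + 1 => (lam_add_two p n).le.trans (sup_le ?_ (pPow_le_self _ p))
  exact Subgroup.commutator_le_left _ _

theorem map_lam_of_surjective {G' : Type*} [Group G'] {f : G →* G'}
    (hf : Function.Surjective f) : ∀ n, (lam p n).map f = lam p n
  | 0 | 1 => Subgroup.map_top_of_surjective f hf
  | n + 2 => by
    rw [lam_add_two, Subgroup.map_sup, Subgroup.map_commutator, map_pPow,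
      map_lam_of_surjective hf (n + 1), Subgroup.map_top_of_surjective f hf, lam_add_two]

theorem commute_mk_of_mem_lam {n : ℕ} {x : G} (hx : x ∈ lam p (n + 1)) (y : G) :
    Commute (x : G ⧸ lam p (n + 2)) y := by
  refine (QuotientGroup.eq ..).mpr ?_
  have h : (x * y)⁻¹ * (y * x) = ⁅x⁻¹, y⁻¹⁆⁻¹ := by group
  rw [h]
  exact inv_mem (Subgroup.mem_sup_left
    (Subgroup.commutator_mem_commutator (inv_mem hx) (Subgroup.mem_top _)))

theorem mk_pow_eq_one_of_mem_lam {n : ℕ} {x : G} (hx : x ∈ lam p (n + 1)) :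
    (x : G ⧸ lam p (n + 2)) ^ p = 1 :=
  (QuotientGroup.eq_one_iff _).mpr (Subgroup.mem_sup_right (Subgroup.subset_closure ⟨x, hx, rfl⟩))

theorem mk_pow_eq_of_mk_eq {n : ℕ} {x y : G} (h : (x : G ⧸ lam p (n + 1)) = y) :
    ((x ^ p : G) : G ⧸ lam p (n + 2)) = (y ^ p : G) := by
  obtain ⟨z, hz, rfl⟩ : ∃ z ∈ lam p (n + 1), y = x * z :=
    ⟨x⁻¹ * y, QuotientGroup.eq.mp h, by group⟩
  rw [QuotientGroup.mk_pow, QuotientGroup.mk_pow, QuotientGroup.mk_mul,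
    (commute_mk_of_mem_lam p hz x).symm.mul_pow, mk_pow_eq_one_of_mem_lam p hz, mul_one]

theorem mk_pow_pow_eq_of_mk_eq {x y : G} (h : (x : G ⧸ lam p 2) = y) :
    ∀ k, ((x ^ p ^ k : G) : G ⧸ lam p (k + 2)) = (y ^ p ^ k : G)
  | 0 => by simpa using h
  | k + 1 => by
    simpa only [pow_succ, pow_mul] using mk_pow_eq_of_mk_eq p (mk_pow_pow_eq_of_mk_eq h k)

theorem lam_le_comap_range_pow {A : Type*} [CommGroup A] (f : G →* A) :
    ∀ k, lam p (k + 1) ≤ (powMonoidHom (p ^ k) : A →* A).range.comap f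
  | 0 => fun x _ => ⟨f x, by simp⟩
  | k + 1 => by
    refine (lam_add_two p k).le.trans (sup_le ?_ ?_)
    · rw [Subgroup.commutator_le]
      intro a _ b _
      simp [(commutatorElement_eq_one_iff_commute).mpr (mul_comm (f a) (f b))]
    · refine (Subgroup.closure_le _).mpr ?_
      rintro _ ⟨h, hh, rfl⟩
      obtain ⟨b, hb⟩ := lam_le_comap_range_pow f k hh
      exact ⟨b, by simp only [powMonoidHom_apply] at hb ⊢; rw [map_pow, ← hb, ← pow_mul, pow_succ]⟩

theorem mk_mem_lam_iff {n k : ℕ} (hkn : k ≤ n) {w : G} :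
    (w : G ⧸ lam p n) ∈ lam p k ↔ w ∈ lam p k := by
  rw [← map_lam_of_surjective p (QuotientGroup.mk'_surjective (lam p n)) k,
    ← QuotientGroup.mk'_apply, ← Subgroup.mem_comap, Subgroup.comap_map_eq,
    QuotientGroup.ker_mk', sup_eq_left.mpr (lam_antitone p hkn)]

theorem lam_quotient_eq_bot (n : ℕ) : lam (G := G ⧸ lam p n) p n = ⊥ := by
  refine (Subgroup.eq_bot_iff_forall _).mpr fun g hg => ?_
  induction g using QuotientGroup.induction_on with
  | H w => exact (QuotientGroup.eq_one_iff w).mpr ((mk_mem_lam_iff p le_rfl).mp hg)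

theorem pow_pow_eq_of_inv_mul_mem_lam_two {m : ℕ} (hG : lam (G := G) p (m + 2) = ⊥) {g h : G}
    (hgh : g⁻¹ * h ∈ lam p 2) : g ^ p ^ m = h ^ p ^ m := by
  have := mk_pow_pow_eq_of_mk_eq p (QuotientGroup.eq.mpr hgh) m
  rwa [QuotientGroup.eq, hG, Subgroup.mem_bot, inv_mul_eq_one] at this

end Lam

section ExponentSums

open FreeGroup

def exponentSums : FreeGroup (Fin 2) →* Multiplicative ℤ × Multiplicative ℤ :=
  FreeGroup.lift ![(.ofAdd 1, 1), (1, .ofAdd 1)]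

theorem exponentSums_surjective : Function.Surjective exponentSums := fun v =>
  ⟨of 0 ^ v.1.toAdd * of 1 ^ v.2.toAdd, by simp [exponentSums, ← ofAdd_zsmul]⟩

variable {p : ℕ}

theorem mem_lam_two_of_exponentSums_mem_range {w : FreeGroup (Fin 2)}
    (hw : exponentSums w ∈ (powMonoidHom p).range) : w ∈ lam p 2 := by
  -- `F/λ₂(F)` is abelian of exponent `p`, so its quotient map factors through `exponentSums`
  -- and kills `p`-th powers there.
  let π := QuotientGroup.mk' (lam (G := FreeGroup (Fin 2)) p 2)
  have hcomm : Commute (π (of 0)) (π (of 1)) :=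
    commute_mk_of_mem_lam p (n := 0) (Subgroup.mem_top _) _
  let θ := (zpowersHom _ (π (of 0))).noncommCoprod (zpowersHom _ (π (of 1)))
    fun i j => by simpa using hcomm.zpow_zpow i.toAdd j.toAdd
  have hθ : θ.comp exponentSums = π :=
    FreeGroup.ext_hom _ _ fun i => by fin_cases i <;> simp [θ, exponentSums]
  obtain ⟨v, hv⟩ := hw
  obtain ⟨x, hx⟩ := QuotientGroup.mk_surjective (θ v)
  have hπw : π w = 1 := by
    rw [← hθ, MonoidHom.comp_apply, ← hv, powMonoidHom_apply, map_pow, ← hx]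
    exact mk_pow_eq_one_of_mem_lam p (n := 0) (Subgroup.mem_top x)
  rwa [← QuotientGroup.ker_mk' (lam p 2), MonoidHom.mem_ker]

theorem exponentSums_mem_range_pow_iff {w : FreeGroup (Fin 2)} :
    exponentSums w ∈ (powMonoidHom p).range ↔ w ∈ lam p 2 := by
  refine ⟨mem_lam_two_of_exponentSums_mem_range, fun hw => ?_⟩
  simpa using lam_le_comap_range_pow p exponentSums 1 hw

theorem mem_lam_two_of_pow_mem_lam (hp : p ≠ 0) (m : ℕ) {w : FreeGroup (Fin 2)}
    (hw : w ^ p ^ m ∈ lam p (m + 2)) : w ∈ lam p 2 := by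
  obtain ⟨v, hv⟩ := lam_le_comap_range_pow p exponentSums (m + 1) hw
  refine mem_lam_two_of_exponentSums_mem_range ⟨v, pow_left_injective (pow_ne_zero m hp) ?_⟩
  simpa only [powMonoidHom_apply, map_pow, ← pow_mul, ← pow_succ'] using hv

end ExponentSums

def reduceMod (p : ℕ) :
    Multiplicative ℤ × Multiplicative ℤ →* Multiplicative (ZMod p) × Multiplicative (ZMod p) :=
  let r := (Int.castAddHom (ZMod p)).toMultiplicative
  r.prodMap r

theorem reduceMod_eq_one_iff (p : ℕ) {v : Multiplicative ℤ × Multiplicative ℤ} :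
    reduceMod p v = 1 ↔ v ∈ (powMonoidHom p).range := by
  have hcast (a : Multiplicative ℤ) : ((a.toAdd : ℤ) : ZMod p) = 0 ↔ ∃ c, .ofAdd c ^ p = a := by
    rw [ZMod.intCast_zmod_eq_zero_iff_dvd]
    refine exists_congr fun c => ?_
    rw [← Multiplicative.toAdd.injective.eq_iff, toAdd_pow, toAdd_ofAdd, nsmul_eq_mul, eq_comm]
  obtain ⟨a, b⟩ := v
  simp [reduceMod, Prod.ext_iff, hcast]

theorem reduceMod_surjective (p : ℕ) : Function.Surjective (reduceMod p) := by
  rintro ⟨a, b⟩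
  refine ⟨(.ofAdd (ZMod.cast a.toAdd), .ofAdd (ZMod.cast b.toAdd)), ?_⟩
  simp [reduceMod]

section FrattiniMap

variable (p m : ℕ)

def frattiniMap :
    FreeGroup (Fin 2) ⧸ lam p (m + 2) →* Multiplicative (ZMod p) × Multiplicative (ZMod p) :=
  QuotientGroup.lift _ ((reduceMod p).comp exponentSums) fun w hw => by
    rw [MonoidHom.mem_ker, MonoidHom.comp_apply, reduceMod_eq_one_iff,
      exponentSums_mem_range_pow_iff]
    exact lam_antitone p (by omega) hw

theorem frattiniMap_surjective : Function.Surjective (frattiniMap p m) := by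
  intro v
  obtain ⟨e, rfl⟩ := reduceMod_surjective p v
  obtain ⟨w, rfl⟩ := exponentSums_surjective e
  exact ⟨w, rfl⟩

theorem frattiniMap_eq_one_iff {g : FreeGroup (Fin 2) ⧸ lam p (m + 2)} :
    frattiniMap p m g = 1 ↔ g ∈ lam p 2 := by
  induction g using QuotientGroup.induction_on with
  | H w =>
    rw [frattiniMap, QuotientGroup.lift_mk, MonoidHom.comp_apply, reduceMod_eq_one_iff,
      exponentSums_mem_range_pow_iff, mk_mem_lam_iff p (by omega)]

theorem pow_pow_ne_one_of_notMem_lam_two (hp : p ≠ 0)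
    {g : FreeGroup (Fin 2) ⧸ lam p (m + 2)} (hg : g ∉ lam p 2) : g ^ p ^ m ≠ 1 := by
  induction g using QuotientGroup.induction_on with
  | H w =>
    rw [← QuotientGroup.mk_pow, Ne, QuotientGroup.eq_one_iff]
    rw [mk_mem_lam_iff p (by omega)] at hg
    exact fun h => hg (mem_lam_two_of_pow_mem_lam hp m h)

end FrattiniMap

theorem exists_pow_mul_pow_eq_of_closure_pair_eq_top {A : Type*} [CommGroup A] [Finite A]
    {p : ℕ} (hp : 0 < p) (hA : ∀ a : A, a ^ p = 1) {a b : A}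
    (h : Subgroup.closure {a, b} = ⊤) (v : A) : ∃ i j : Fin p, a ^ (i : ℕ) * b ^ (j : ℕ) = v := by
  have hv : v ∈ Submonoid.closure {a, b} := by
    rw [← Subgroup.closure_toSubmonoid_of_finite, h]
    trivial
  obtain ⟨i, j, rfl⟩ := (Submonoid.mem_closure_pair a b v).mp hv
  exact ⟨⟨i % p, Nat.mod_lt i hp⟩, ⟨j % p, Nat.mod_lt j hp⟩,
    by rw [← pow_eq_pow_mod i (hA a), ← pow_eq_pow_mod j (hA b)]⟩

-- `(ℤ/p)²` has only `p + 1 ≤ 4` lines, while `⟨a⟩, ⟨b⟩, ⟨ab⟩` are three distinct lines for every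
-- generating pair `{a, b}`: two of the six lines coincide.
set_option maxRecDepth 100000 in
set_option synthInstance.maxSize 2000 in
theorem exists_pow_eq_of_spanning_pairs {p : ℕ} (hp : p = 2 ∨ p = 3) :
    ∀ a₁ b₁ : Multiplicative (ZMod p) × Multiplicative (ZMod p),
      (∀ v, ∃ i j : Fin p, a₁ ^ (i : ℕ) * b₁ ^ (j : ℕ) = v) →
    ∀ a₂ b₂ : Multiplicative (ZMod p) × Multiplicative (ZMod p),
      (∀ v, ∃ i j : Fin p, a₂ ^ (i : ℕ) * b₂ ^ (j : ℕ) = v) →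
    ∃ s t : Fin 3, ∃ k : Fin p,
      ![a₂, b₂, a₂ * b₂] t = ![a₁, b₁, a₁ * b₁] s ^ (k : ℕ) ∧ ¬ ![a₂, b₂, a₂ * b₂] t = 1 := by
  rcases hp with rfl | rfl <;> decide +kernel

theorem exists_pow_eq_of_closure_pair_eq_top {p : ℕ} (hp : p = 2 ∨ p = 3)
    {a₁ b₁ a₂ b₂ : Multiplicative (ZMod p) × Multiplicative (ZMod p)}
    (h₁ : Subgroup.closure {a₁, b₁} = ⊤) (h₂ : Subgroup.closure {a₂, b₂} = ⊤) :
    ∃ s t : Fin 3, ∃ k : ℕ,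
      ![a₂, b₂, a₂ * b₂] t = ![a₁, b₁, a₁ * b₁] s ^ k ∧ ![a₂, b₂, a₂ * b₂] t ≠ 1 := by
  have : NeZero p := ⟨by omega⟩
  have hexp (v : Multiplicative (ZMod p) × Multiplicative (ZMod p)) : v ^ p = 1 := by
    simp only [Prod.ext_iff, Prod.pow_fst, Prod.pow_snd, Prod.fst_one, Prod.snd_one]
    constructor <;> apply Multiplicative.toAdd.injective <;> simp [nsmul_eq_mul]
  obtain ⟨s, t, k, hk⟩ := exists_pow_eq_of_spanning_pairs hp a₁ b₁
    (exists_pow_mul_pow_eq_of_closure_pair_eq_top (by omega) hexp h₁) a₂ b₂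
    (exists_pow_mul_pow_eq_of_closure_pair_eq_top (by omega) hexp h₂)
  exact ⟨s, t, k, hk⟩

theorem pow_mem_conjClosure {G : Type*} [Group G] (x : G) (k : ℕ) : x ^ k ∈ conjClosure x :=
  Set.mem_iUnion.mpr ⟨1, x ^ k, ⟨k, by simp⟩, by simp⟩

theorem conjClosure_subset_sigmaSet {G : Type*} [Group G] (x y : G) (s : Fin 3) :
    conjClosure (![x, y, x * y] s) ⊆ SigmaSet x y := by
  fin_cases s
  · exact Set.subset_union_left.trans Set.subset_union_left
  · exact Set.subset_union_right.trans Set.subset_union_left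
  · exact Set.subset_union_right

theorem map_vecCons_mul {G H : Type*} [Group G] [Group H] (f : G →* H) (x y : G) (s : Fin 3) :
    f (![x, y, x * y] s) = ![f x, f y, f x * f y] s := by
  fin_cases s <;> simp

theorem closure_pair_map_eq_top {G H : Type*} [Group G] [Group H] {f : G →* H}
    (hf : Function.Surjective f) {x y : G} (h : Subgroup.closure {x, y} = ⊤) :
    Subgroup.closure {f x, f y} = ⊤ := by
  rw [← Set.image_pair, ← MonoidHom.map_closure, h, Subgroup.map_top_of_surjective f hf]

/-- For `p ∈ {2, 3}` and `n ≥ 2`, the quotient `F/λ_n(F)` of the free group of rank 2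
is not a Beauville group. -/
theorem statement_7 (p n : ℕ) (hp : p = 2 ∨ p = 3) (hn : 2 ≤ n) :
    ¬ IsBeauvilleGroup (FreeGroup (Fin 2) ⧸ lam p n) := by
  obtain ⟨m, rfl⟩ : ∃ m, n = m + 2 := ⟨n - 2, by omega⟩
  rintro ⟨-, -, x₁, y₁, x₂, y₂, h₁, h₂, hdisj⟩
  have hψ := frattiniMap_surjective p m
  obtain ⟨s, t, k, hk, hne⟩ := exists_pow_eq_of_closure_pair_eq_top hp
    (closure_pair_map_eq_top hψ h₁) (closure_pair_map_eq_top hψ h₂)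
  set u₁ := ![x₁, y₁, x₁ * y₁] s
  set u₂ := ![x₂, y₂, x₂ * y₂] t
  rw [← map_vecCons_mul, ← map_vecCons_mul, ← map_pow] at hk
  rw [← map_vecCons_mul, Ne, frattiniMap_eq_one_iff] at hne
  have hcong : (u₁ ^ k)⁻¹ * u₂ ∈ lam p 2 := by
    rw [← frattiniMap_eq_one_iff p m, map_mul, map_inv, hk, inv_mul_cancel]
  have hpow : u₂ ^ p ^ m = u₁ ^ (k * p ^ m) := by
    rw [pow_mul]
    exact (pow_pow_eq_of_inv_mul_mem_lam_two p (lam_quotient_eq_bot p (m + 2)) hcong).symm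
  have hmem : u₂ ^ p ^ m ∈ SigmaSet x₁ y₁ ∩ SigmaSet x₂ y₂ :=
    ⟨conjClosure_subset_sigmaSet x₁ y₁ s (hpow ▸ pow_mem_conjClosure u₁ _),
      conjClosure_subset_sigmaSet x₂ y₂ t (pow_mem_conjClosure u₂ _)⟩
  rw [hdisj] at hmem
  exact pow_pow_ne_one_of_notMem_lam_two p m (by omega) hne hmem
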